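/- Let g be an element of Thompson's group V with N(g) ≥ 4 such that the single letter 0 is the range code of some branch of g, and let g1 = g·x0^2·x1^{−1}·x0^{−1}. Then the word 0 is not the range code of any branch of g1 (in fact 0 is a strict prefix of the range code of some branch of g1); N(g1) ≤ N(g) + 2; and N(g·w') ≥ N(g) for every prefix w' of the word x0·x0·x1^{−1}·x0^{−1} (i.e., for each of the elements g·x0, g·x0^2, g·x0^2·x1^{−1}, g·x0^2·x1^{−1}·x0^{−1}). -/

import Mathlib

/-!
Formalization framework for Thompson's groups `F ≤ T ≤ V` acting on the
Cantor set `{0,1}^ℕ`.  Elements of `V` are permutations of the Cantor set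
admitting a finite table of branches `u → v` (complete prefix codes) with
`g(uω) = vω`.  Products in the paper are composed left-to-right, i.e. the
paper's `g·h` is `Equiv.trans g h` (equivalently `h * g` in `Equiv.Perm`).
-/

abbrev CSeq : Type := ℕ → Bool
abbrev VPerm : Type := Equiv.Perm CSeq

/-- Concatenation of a finite binary word with an infinite binary word. -/
def app (u : List Bool) (ω : CSeq) : CSeq := fun n =>
  if h : n < u.length then u[n] else ω (n - u.length)

/-- The finite word `u` is a prefix of the infinite word `ω`. -/
def IsPref (u : List Bool) (ω : CSeq) : Prop := ∃ ω', ω = app u ω'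

/-- The finite table of branches `T` represents the permutation `g` of the
Cantor set: the domain codes and the range codes each form a complete prefix
code, and `g` maps `uω ↦ vω` for every branch `(u, v) ∈ T`. -/
def Represents (g : VPerm) (T : Finset (List Bool × List Bool)) : Prop :=
  (∀ ω : CSeq, ∃! p : List Bool × List Bool, p ∈ T ∧ IsPref p.1 ω) ∧
  (∀ ω : CSeq, ∃! p : List Bool × List Bool, p ∈ T ∧ IsPref p.2 ω) ∧
  (∀ p ∈ T, ∀ ω : CSeq, g (app p.1 ω) = app p.2 ω)

/-- A table of branches is reduced if it contains no pair of branches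
`u0 → v0`, `u1 → v1`. -/
def Reduced (T : Finset (List Bool × List Bool)) : Prop :=
  ∀ u v : List Bool,
    ¬((u ++ [false], v ++ [false]) ∈ T ∧ (u ++ [true], v ++ [true]) ∈ T)

/-- Membership in Thompson's group `V`. -/
def InV (g : VPerm) : Prop := ∃ T, Represents g T

/-- `u → v` is a branch of the (unique) reduced representation of `g`. -/
def IsBranch (g : VPerm) (u v : List Bool) : Prop :=
  ∃ T, Represents g T ∧ Reduced T ∧ (u, v) ∈ T

/-- `N(g)`: the number of branches of the reduced representation of `g`. -/
noncomputable def Nbr (g : VPerm) : ℕ :=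
  sInf {n | ∃ T, Represents g T ∧ Reduced T ∧ T.card = n}

/-- `ℓ0(g)`: the unique `ℓ ≥ 1` such that `0^ℓ` is the range code of some
branch of `g`. -/
noncomputable def ell0 (g : VPerm) : ℕ :=
  sInf {ℓ | 1 ≤ ℓ ∧ ∃ u, IsBranch g u (List.replicate ℓ false)}

/-- `ℓ1(g)`: the unique `ℓ ≥ 1` such that `1^ℓ` is the range code of some
branch of `g`. -/
noncomputable def ell1 (g : VPerm) : ℕ :=
  sInf {ℓ | 1 ≤ ℓ ∧ ∃ u, IsBranch g u (List.replicate ℓ true)}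

/-- `w` is a strict prefix of the range code of some branch of `g`. -/
def StrictPrefOfBranch (g : VPerm) (w : List Bool) : Prop :=
  ∃ u v, IsBranch g u v ∧ w <+: v ∧ w ≠ v

/-- Strict lexicographic order on infinite binary words. -/
def lexLt (a b : CSeq) : Prop :=
  ∃ n, (∀ i < n, a i = b i) ∧ a n = false ∧ b n = true

/-- Membership in Thompson's group `F`: an element of `V` preserving the
(lexicographic) order of the Cantor set. -/
def InF (g : VPerm) : Prop :=
  InV g ∧ ∀ a b : CSeq, lexLt a b → lexLt (g a) (g b)

/-- `(a, b, c)` is a (strict) cyclically ordered triple. -/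
def cyc3 (a b c : CSeq) : Prop :=
  (lexLt a b ∧ lexLt b c) ∨ (lexLt b c ∧ lexLt c a) ∨ (lexLt c a ∧ lexLt a b)

/-- Membership in Thompson's group `T`: an element of `V` preserving the
cyclic order of the Cantor set. -/
def InT (g : VPerm) : Prop :=
  InV g ∧ ∀ a b c : CSeq, cyc3 a b c → cyc3 (g a) (g b) (g c)

/-- Word length of `g` with respect to the generating set `S` (letters are
elements of `S` or inverses of elements of `S`). -/
noncomputable def wlen (S : Set VPerm) (g : VPerm) : ℕ :=
  sInf {n | ∃ l : List VPerm,
    l.length = n ∧ (∀ x ∈ l, x ∈ S ∨ x⁻¹ ∈ S) ∧ l.prod = g}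

/-- `h'` is the copy `h_{[u]}` of `h` supported on the cylinder of `u`. -/
def IsCopy (h : VPerm) (u : List Bool) (h' : VPerm) : Prop :=
  (∀ ω : CSeq, h' (app u ω) = app u (h ω)) ∧
  (∀ ω : CSeq, ¬ IsPref u ω → h' ω = ω)

/-- Evaluation (left-to-right) of the word `w` starting at the element `g`:
the paper's product `g · w`. -/
def wordEval (g : VPerm) (w : List VPerm) : VPerm :=
  w.foldl (fun a b => a.trans b) g

/-- Branches of the generator `x0`: `00→0`, `01→10`, `1→11`. -/
def x0T : Finset (List Bool × List Bool) :=
  {([false, false], [false]), ([false, true], [true, false]),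
   ([true], [true, true])}

/-- Branches of the generator `x1`: `0→0`, `100→10`, `101→110`, `11→111`. -/
def x1T : Finset (List Bool × List Bool) :=
  {([false], [false]), ([true, false, false], [true, false]),
   ([true, false, true], [true, true, false]),
   ([true, true], [true, true, true])}

/-- Branches of the generator `c1`: `0→10`, `10→11`, `11→0`. -/
def c1T : Finset (List Bool × List Bool) :=
  {([false], [true, false]), ([true, false], [true, true]),
   ([true, true], [false])}

/-- Branches of the generator `π0`: `0→10`, `10→0`, `11→11`. -/
def pi0T : Finset (List Bool × List Bool) :=
  {([false], [true, false]), ([true, false], [false]),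
   ([true, true], [true, true])}

/-- The standard generators `x_j`, `j ≥ 0`, of `F`: for `r ≥ 1`,
`x_{r+1} = x0^{-r} · x1 · x0^{r}` in the left-to-right convention of the
paper, i.e. `x0 ^ r * x1 * (x0⁻¹) ^ r` in `Equiv.Perm`. -/
def xseq (x0 x1 : VPerm) : ℕ → VPerm
  | 0 => x0
  | r + 1 => x0 ^ r * x1 * (x0⁻¹) ^ r

/-!
Write the reduced table of `g` as `u → 0` together with branches `uᵢ → 1vᵢ`. Every prefix `w'`
of `x0·x0·x1⁻¹·x0⁻¹` acts on this table in a controlled way: the cone of `u` is cut into the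
two or three pieces of a fixed local table, and the other branches only gain or lose leading
`1`s. Such a table is again reduced, so `N(g·w') = N(g) - 1 + #(local table)`, i.e.
`N(g) + 1, N(g) + 2, N(g) + 2, N(g) + 2`. The final table sends `u00 → 00`, `u01 → 010`,
`u1 → 011` and `uᵢ → 1vᵢ`, so `0` is no longer a range code.
-/

lemma app_of_lt {u : List Bool} {ω : CSeq} {i : ℕ} (h : i < u.length) : app u ω i = u[i] := by
  simp [app, h]

lemma app_of_le {u : List Bool} {ω : CSeq} {i : ℕ} (h : u.length ≤ i) :
    app u ω i = ω (i - u.length) := by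
  simp [app, Nat.not_lt.mpr h]

lemma app_append (u v : List Bool) (ω : CSeq) : app (u ++ v) ω = app u (app v ω) := by
  funext n
  by_cases h1 : n < u.length
  · rw [app_of_lt (by simp; omega), app_of_lt h1, List.getElem_append_left h1]
  by_cases h2 : n < u.length + v.length
  · rw [app_of_lt (by simp; omega), app_of_le (by omega), app_of_lt (by omega),
      List.getElem_append_right (by omega)]
  · rw [app_of_le (by simp; omega), app_of_le (by omega), app_of_le (by omega)]
    congr 1
    simp only [List.length_append]
    omega

lemma app_injective (u : List Bool) : Function.Injective (app u) := fun ω ω' h =>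
  funext fun n => by
    simpa [app_of_le] using congrFun h (n + u.length)

lemma eq_of_app_eq_app {u v : List Bool} (h : ∀ ω, app u ω = app v ω) : u = v := by
  have hlen : u.length = v.length := by
    by_contra hne
    rcases Nat.lt_or_gt_of_ne hne with hlt | hlt
    · have := congrFun (h fun _ => !v[u.length]) u.length
      rw [app_of_le le_rfl, app_of_lt hlt] at this
      simp at this
    · have := congrFun (h fun _ => !u[v.length]) v.length
      rw [app_of_lt hlt, app_of_le le_rfl] at this
      simp at this
  refine List.ext_getElem hlen fun i h1 h2 => ?_
  simpa [app_of_lt h1, app_of_lt h2] using congrFun (h fun _ => false) i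

lemma isPref_app_self (u : List Bool) (ω : CSeq) : IsPref u (app u ω) := ⟨ω, rfl⟩

lemma isPref_iff {u : List Bool} {ω : CSeq} :
    IsPref u ω ↔ ∀ i (hi : i < u.length), ω i = u[i] := by
  constructor
  · rintro ⟨ω', rfl⟩ i hi
    exact app_of_lt hi
  · intro h
    refine ⟨fun n => ω (n + u.length), funext fun n => ?_⟩
    by_cases hn : n < u.length
    · rw [app_of_lt hn, h n hn]
    · rw [app_of_le (by omega)]
      congr 1
      omega

lemma isPref_singleton_iff {b : Bool} {ω : CSeq} : IsPref [b] ω ↔ ω 0 = b := by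
  simp [isPref_iff]

lemma isPref_append_app_iff {u e : List Bool} {σ : CSeq} :
    IsPref (u ++ e) (app u σ) ↔ IsPref e σ := by
  simp only [IsPref, app_append]
  exact exists_congr fun τ => (app_injective u).eq_iff

lemma IsPref.of_prefix {u v : List Bool} {ω : CSeq} (h : IsPref v ω) (huv : u <+: v) :
    IsPref u ω := by
  obtain ⟨s, rfl⟩ := huv
  obtain ⟨ω', rfl⟩ := h
  rw [app_append]
  exact isPref_app_self u _

lemma IsPref.prefix_or_prefix {u v : List Bool} {ω : CSeq} (hu : IsPref u ω)
    (hv : IsPref v ω) : u <+: v ∨ v <+: u := by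
  have key : ∀ {a b : List Bool}, IsPref a ω → IsPref b ω → a.length ≤ b.length → a <+: b := by
    intro a b ha hb hle
    rw [isPref_iff] at ha hb
    have : b.take a.length = a := List.ext_getElem (by simp [hle]) fun i h1 h2 => by
      rw [List.getElem_take, ← hb i (by omega), ha i h2]
    exact this ▸ List.take_prefix _ _
  exact (le_total u.length v.length).imp (key hu hv) (key hv hu)

def IsCompleteCode (D : Set (List Bool)) : Prop := ∀ ω : CSeq, ∃! d, d ∈ D ∧ IsPref d ω

lemma IsCompleteCode.graft {u : List Bool} {D E : Set (List Bool)}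
    (hD : IsCompleteCode (insert u D)) (hu : u ∉ D) (hE : IsCompleteCode E) :
    IsCompleteCode ((u ++ ·) '' E ∪ D) := by
  intro ω
  by_cases huω : IsPref u ω
  · obtain ⟨σ, rfl⟩ := huω
    obtain ⟨e, ⟨he, heσ⟩, he_uniq⟩ := hE σ
    refine ⟨u ++ e, ⟨Or.inl ⟨e, he, rfl⟩, isPref_append_app_iff.2 heσ⟩, ?_⟩
    rintro d ⟨⟨e', he', rfl⟩ | hd, hdω⟩
    · rw [he_uniq e' ⟨he', isPref_append_app_iff.1 hdω⟩]
    · have hdu : d = u := (hD (app u σ)).unique ⟨Or.inr hd, hdω⟩ ⟨Or.inl rfl, isPref_app_self u σ⟩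
      exact absurd (hdu ▸ hd) hu
  · obtain ⟨d, ⟨hd, hdω⟩, hd_uniq⟩ := hD ω
    have hdD : d ∈ D := hd.resolve_left (by rintro rfl; exact huω hdω)
    refine ⟨d, ⟨Or.inr hdD, hdω⟩, ?_⟩
    rintro d' ⟨⟨e', -, rfl⟩ | hd', hd'ω⟩
    · exact absurd (hd'ω.of_prefix (List.prefix_append u e')) huω
    · exact hd_uniq d' ⟨Or.inr hd', hd'ω⟩

lemma isCompleteCode_zero_one : IsCompleteCode {[false], [true]} := by
  intro ω
  refine ⟨[ω 0], ⟨by cases ω 0 <;> simp, isPref_singleton_iff.2 rfl⟩, ?_⟩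
  rintro d ⟨rfl | rfl, hdω⟩ <;> rw [isPref_singleton_iff.1 hdω]

lemma isCompleteCode_zero_zero_zero_one_one :
    IsCompleteCode {[false, false], [false, true], [true]} := by
  convert isCompleteCode_zero_one.graft (u := [false]) (by simp) isCompleteCode_zero_one using 1
  ext d
  simp only [Set.mem_insert_iff, Set.mem_singleton_iff, Set.mem_union, Set.mem_image]
  aesop

def MapsCone (g : VPerm) (u v : List Bool) : Prop := ∀ ω, g (app u ω) = app v ω

namespace MapsCone

variable {g h : VPerm} {u v w : List Bool}

lemma append (hg : MapsCone g u v) (s : List Bool) : MapsCone g (u ++ s) (v ++ s) := fun ω => by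
  rw [app_append, app_append, hg]

lemma right_unique (hv : MapsCone g u v) (hw : MapsCone g u w) : v = w :=
  eq_of_app_eq_app fun ω => by rw [← hv ω, ← hw ω]

lemma trans (hg : MapsCone g u v) (hh : MapsCone h v w) : MapsCone (g.trans h) u w := fun ω => by
  rw [Equiv.trans_apply, hg, hh]

lemma sq (huv : MapsCone g u v) (hvw : MapsCone g v w) : MapsCone (g ^ 2) u w := fun ω => by
  rw [pow_two, Equiv.Perm.mul_apply, huv, hvw]

lemma inv (hg : MapsCone g u v) : MapsCone g⁻¹ v u := fun ω => by
  rw [← hg ω]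
  exact g.symm_apply_apply _

end MapsCone

namespace Represents

variable {g : VPerm} {T T' R : Finset (List Bool × List Bool)}

lemma mapsCone (hT : Represents g T) {p : List Bool × List Bool} (hp : p ∈ T) :
    MapsCone g p.1 p.2 :=
  hT.2.2 p hp

lemma isCompleteCode (hT : Represents g T) :
    IsCompleteCode (Prod.fst '' (↑T : Set (List Bool × List Bool))) := by
  intro ω
  obtain ⟨p, ⟨hp, hpω⟩, hp_uniq⟩ := hT.1 ω
  refine ⟨p.1, ⟨⟨p, hp, rfl⟩, hpω⟩, ?_⟩
  rintro _ ⟨⟨q, hq, rfl⟩, hqω⟩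
  rw [hp_uniq q ⟨hq, hqω⟩]

/-- Range completeness comes for free: `g` is a bijection. -/
lemma of_isCompleteCode (hD : IsCompleteCode (Prod.fst '' (↑T : Set (List Bool × List Bool))))
    (hT : ∀ p ∈ T, MapsCone g p.1 p.2) : Represents g T := by
  have hdom : ∀ ω, ∃! p, p ∈ T ∧ IsPref p.1 ω := by
    intro ω
    obtain ⟨_, ⟨⟨p, hp, rfl⟩, hpω⟩, hd_uniq⟩ := hD ω
    refine ⟨p, ⟨hp, hpω⟩, fun q ⟨hq, hqω⟩ => ?_⟩
    have h1 : q.1 = p.1 := hd_uniq q.1 ⟨⟨q, hq, rfl⟩, hqω⟩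
    exact Prod.ext h1 ((hT q hq).right_unique (by rw [h1]; exact hT p hp))
  refine ⟨hdom, fun ω => ?_, hT⟩
  obtain ⟨p, ⟨hp, σ, hσ⟩, hp_uniq⟩ := hdom (g.symm ω)
  have hω : ω = app p.2 σ := by rw [← hT p hp σ, ← hσ, Equiv.apply_symm_apply]
  refine ⟨p, ⟨hp, σ, hω⟩, fun q ⟨hq, τ, hτ⟩ => hp_uniq q ⟨hq, τ, ?_⟩⟩
  rw [hτ, ← hT q hq τ, Equiv.symm_apply_apply]

lemma eq_of_fst_prefix (hT : Represents g T) {p q : List Bool × List Bool} (hp : p ∈ T)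
    (hq : q ∈ T) (h : p.1 <+: q.1) : p = q :=
  (hT.1 (app q.1 fun _ => false)).unique ⟨hp, (isPref_app_self _ _).of_prefix h⟩
    ⟨hq, isPref_app_self _ _⟩

lemma eq_of_snd_prefix (hT : Represents g T) {p q : List Bool × List Bool} (hp : p ∈ T)
    (hq : q ∈ T) (h : p.2 <+: q.2) : p = q :=
  (hT.2.1 (app q.2 fun _ => false)).unique ⟨hp, (isPref_app_self _ _).of_prefix h⟩
    ⟨hq, isPref_app_self _ _⟩

lemma not_fst_prefix (hT : Represents g T) {p q : List Bool × List Bool} (hp : p ∈ T)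
    (hq : q ∈ T) (hpq : p ≠ q) : ¬ p.1 <+: q.1 :=
  fun h => hpq (hT.eq_of_fst_prefix hp hq h)

lemma not_snd_prefix (hT : Represents g T) {p q : List Bool × List Bool} (hp : p ∈ T)
    (hq : q ∈ T) (hpq : p ≠ q) : ¬ p.2 <+: q.2 :=
  fun h => hpq (hT.eq_of_snd_prefix hp hq h)

lemma exists_sibling (hT : Represents g T) {w y : List Bool} {b : Bool}
    (hm : (w ++ [b], y) ∈ T) (hmax : ∀ q ∈ T, w <+: q.1 → q.1.length ≤ w.length + 1) :
    ∃ z, (w ++ [!b], z) ∈ T := by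
  obtain ⟨q, ⟨hq, hqω⟩, -⟩ := hT.1 (app (w ++ [!b]) fun _ => false)
  suffices hq1 : q.1 = w ++ [!b] from ⟨q.2, hq1 ▸ hq⟩
  rcases hqω.prefix_or_prefix (isPref_app_self _ _) with h | h
  · refine (List.prefix_concat_iff.1 h).resolve_right fun hqw => ?_
    obtain rfl := hT.eq_of_fst_prefix hq hm (hqw.trans (List.prefix_append _ _))
    simpa using hqw.length_le
  · refine (h.eq_of_length (le_antisymm h.length_le ?_)).symm
    simpa using hmax q hq ((List.prefix_append _ _).trans h)

/-- A longest counterexample `w b → _` in `T'` has a sibling `w (!b) → _` in `T'`; both are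
restrictions of the coarser branch of `T`, hence mergeable. -/
lemma fst_eq_of_prefix (hT : Represents g T) (hT' : Represents g T') (hR' : Reduced T')
    {p q : List Bool × List Bool} (hp : p ∈ T) (hq : q ∈ T') (h : p.1 <+: q.1) : p.1 = q.1 := by
  classical
  by_contra hne
  set S := T'.filter fun q => ∃ p ∈ T, p.1 <+: q.1 ∧ p.1 ≠ q.1
  obtain ⟨⟨m, y⟩, hmS, hmax⟩ :=
    S.exists_max_image (fun q => q.1.length) ⟨q, Finset.mem_filter.2 ⟨hq, p, hp, h, hne⟩⟩
  obtain ⟨hm, p₀, hp₀, ⟨t, rfl⟩, hp₀ne⟩ := Finset.mem_filter.1 hmS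
  obtain ⟨t', b, rfl⟩ := (List.eq_nil_or_concat' t).resolve_left (by rintro rfl; simp at hp₀ne)
  rw [← List.append_assoc] at hm hmax
  have hcone : ∀ c, MapsCone g (p₀.1 ++ t' ++ [c]) (p₀.2 ++ t' ++ [c]) := fun c => by
    simpa using (hT.mapsCone hp₀).append (t' ++ [c])
  have hrange : ∀ c z, (p₀.1 ++ t' ++ [c], z) ∈ T' → z = p₀.2 ++ t' ++ [c] :=
    fun c z hz => (hT'.mapsCone hz).right_unique (hcone c)
  obtain ⟨z, hz⟩ := hT'.exists_sibling hm fun q hq hwq => by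
    by_contra hlong
    have hqS : q ∈ S := Finset.mem_filter.2 ⟨hq, p₀, hp₀, (List.prefix_append _ _).trans hwq,
      fun e => hlong (by rw [← e]; simp; omega)⟩
    have := hmax q hqS
    simp only [List.length_append, List.length_singleton] at this hlong
    omega
  rw [hrange _ _ hm] at hm
  rw [hrange _ _ hz] at hz
  cases b
  · exact hR' _ _ ⟨hm, hz⟩
  · exact hR' _ _ ⟨hz, hm⟩

lemma subset_of_reduced (hT : Represents g T) (hR : Reduced T) (hT' : Represents g T')
    (hR' : Reduced T') : T ⊆ T' := by
  intro p hp
  obtain ⟨q, ⟨hq, hqω⟩, -⟩ := hT'.1 (app p.1 fun _ => false)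
  have h1 : p.1 = q.1 := by
    rcases (isPref_app_self p.1 _).prefix_or_prefix hqω with h | h
    · exact hT.fst_eq_of_prefix hT' hR' hp hq h
    · exact (hT'.fst_eq_of_prefix hT hR hq hp h).symm
  have h2 : p.2 = q.2 := (hT.mapsCone hp).right_unique (by rw [h1]; exact hT'.mapsCone hq)
  exact Prod.ext h1 h2 ▸ hq

lemma eq_of_reduced (hT : Represents g T) (hR : Reduced T) (hT' : Represents g T')
    (hR' : Reduced T') : T = T' :=
  (hT.subset_of_reduced hR hT' hR').antisymm (hT'.subset_of_reduced hR' hT hR)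

lemma nbr_eq_card (hT : Represents g T) (hR : Reduced T) : Nbr g = T.card := by
  have : {n | ∃ T', Represents g T' ∧ Reduced T' ∧ T'.card = n} = {T.card} := by
    ext n
    constructor
    · rintro ⟨T', hT', hR', rfl⟩
      rw [hT'.eq_of_reduced hR' hT hR]
      rfl
    · rintro rfl
      exact ⟨T, hT, hR, rfl⟩
  rw [Nbr, this, csInf_singleton]

lemma isBranch_iff_mem (hT : Represents g T) (hR : Reduced T) {u v : List Bool} :
    IsBranch g u v ↔ (u, v) ∈ T :=
  ⟨fun ⟨_, hT', hR', h⟩ => hT'.eq_of_reduced hR' hT hR ▸ h, fun h => ⟨T, hT, hR, h⟩⟩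

lemma snd_eq_true_cons {u : List Bool} (hT : Represents g (insert (u, [false]) R))
    (hu : (u, [false]) ∉ R) {p : List Bool × List Bool} (hp : p ∈ R) : ∃ s, p.2 = true :: s := by
  have hne := ne_of_mem_of_not_mem hp hu
  have hpT : p ∈ insert (u, [false]) R := Finset.mem_insert_of_mem hp
  match hv : p.2 with
  | [] =>
    exact absurd (hv ▸ List.nil_prefix) (hT.not_snd_prefix hpT (Finset.mem_insert_self _ _) hne)
  | false :: s =>
    exact absurd (hv ▸ List.prefix_append [false] s)
      (hT.not_snd_prefix (Finset.mem_insert_self _ _) hpT hne.symm)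
  | true :: s => exact ⟨s, rfl⟩

end Represents

lemma Reduced.mono {S T : Finset (List Bool × List Bool)} (hT : Reduced T) (hST : S ⊆ T) :
    Reduced S :=
  fun u v h => hT u v ⟨hST h.1, hST h.2⟩

lemma Reduced.union {X Y : Finset (List Bool × List Bool)} (hX : Reduced X) (hY : Reduced Y)
    (hXY : ∀ p ∈ X, ∀ q ∈ Y, p.1.dropLast ≠ q.1.dropLast) : Reduced (X ∪ Y) := by
  rintro w v ⟨h₀, h₁⟩
  rcases Finset.mem_union.1 h₀ with h₀ | h₀ <;> rcases Finset.mem_union.1 h₁ with h₁ | h₁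
  · exact hX w v ⟨h₀, h₁⟩
  · exact hXY _ h₀ _ h₁ (by simp)
  · exact hXY _ h₁ _ h₀ (by simp)
  · exact hY w v ⟨h₀, h₁⟩

lemma append_eq_concat_iff {c r v : List Bool} {x : Bool} (hr : r ≠ []) :
    c ++ r = v ++ [x] ↔ ∃ r', r = r' ++ [x] ∧ v = c ++ r' := by
  obtain ⟨r', y, rfl⟩ := (List.eq_nil_or_concat' r).resolve_left hr
  simp [← List.append_assoc, eq_comm, and_comm]

def prepend (u c : List Bool) (T : Finset (List Bool × List Bool)) :
    Finset (List Bool × List Bool) :=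
  T.image fun p => (u ++ p.1, c ++ p.2)

lemma card_prepend (u c : List Bool) (T : Finset (List Bool × List Bool)) :
    (prepend u c T).card = T.card :=
  Finset.card_image_of_injective _ fun p q h => by simpa [Prod.ext_iff] using h

lemma Reduced.prepend {T : Finset (List Bool × List Bool)} (hT : Reduced T)
    (hne : ∀ p ∈ T, p.1 ≠ [] ∧ p.2 ≠ []) (u c : List Bool) : Reduced (prepend u c T) := by
  rintro w v ⟨h₀, h₁⟩
  simp only [_root_.prepend, Finset.mem_image, Prod.mk.injEq] at h₀ h₁
  obtain ⟨⟨a₀, r₀⟩, hp₀, ha₀, hr₀⟩ := h₀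
  obtain ⟨⟨a₁, r₁⟩, hp₁, ha₁, hr₁⟩ := h₁
  obtain ⟨a, rfl, rfl⟩ := (append_eq_concat_iff (hne _ hp₀).1).1 ha₀
  obtain ⟨r, rfl, rfl⟩ := (append_eq_concat_iff (hne _ hp₀).2).1 hr₀
  obtain ⟨a', rfl, ha⟩ := (append_eq_concat_iff (hne _ hp₁).1).1 ha₁
  obtain ⟨r', rfl, hr⟩ := (append_eq_concat_iff (hne _ hp₁).2).1 hr₁
  simp only [List.append_cancel_left_eq] at ha hr
  subst ha hr
  exact hT a r ⟨hp₀, hp₁⟩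

section Graft

variable {g h : VPerm} {u v c : List Bool} {A R : Finset (List Bool × List Bool)}

lemma fst_image_prepend_union :
    Prod.fst '' (↑(prepend u [] A ∪ prepend [] c R) : Set (List Bool × List Bool)) =
      (u ++ ·) '' (Prod.fst '' (A : Set (List Bool × List Bool))) ∪
        Prod.fst '' (R : Set (List Bool × List Bool)) := by
  simp [prepend, Set.image_union, Set.image_image]

lemma represents_graft (hT : Represents g (insert (u, v) R)) (huv : (u, v) ∉ R)
    (hA : IsCompleteCode (Prod.fst '' (↑A : Set (List Bool × List Bool))))
    (hAh : ∀ p ∈ A, MapsCone h (v ++ p.1) p.2) (hRh : ∀ p ∈ R, MapsCone h p.2 (c ++ p.2)) :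
    Represents (g.trans h) (prepend u [] A ∪ prepend [] c R) := by
  have hD := hT.isCompleteCode
  rw [Finset.coe_insert, Set.image_insert_eq] at hD
  refine .of_isCompleteCode ?_ fun p hp => ?_
  · rw [fst_image_prepend_union]
    refine hD.graft ?_ hA
    rintro ⟨q, hq, rfl⟩
    exact hT.not_fst_prefix (Finset.mem_insert_self _ _) (Finset.mem_insert_of_mem hq)
      (ne_of_mem_of_not_mem hq huv).symm (List.prefix_refl _)
  · rcases Finset.mem_union.1 hp with hp | hp <;> obtain ⟨a, ha, rfl⟩ := Finset.mem_image.1 hp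
    · exact ((hT.mapsCone (Finset.mem_insert_self _ _)).append a.1).trans (hAh a ha)
    · exact (hT.mapsCone (Finset.mem_insert_of_mem ha)).trans (hRh a ha)

lemma reduced_graft (hT : Represents g (insert (u, v) R)) (huv : (u, v) ∉ R)
    (hred : Reduced (insert (u, v) R)) (hA : Reduced A) (hAne : ∀ p ∈ A, p.1 ≠ [] ∧ p.2 ≠ []) :
    Reduced (prepend u [] A ∪ prepend [] c R) := by
  have hR : ∀ p ∈ R, ¬ u <+: p.1 ∧ p.1 ≠ [] ∧ p.2 ≠ [] := fun p hp => by
    have hne := ne_of_mem_of_not_mem hp huv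
    have hpT : p ∈ insert (u, v) R := Finset.mem_insert_of_mem hp
    refine ⟨hT.not_fst_prefix (Finset.mem_insert_self _ _) hpT hne.symm, ?_, ?_⟩ <;>
      rintro h
    · exact hT.not_fst_prefix hpT (Finset.mem_insert_self _ _) hne (h ▸ List.nil_prefix)
    · exact hT.not_snd_prefix hpT (Finset.mem_insert_self _ _) hne (h ▸ List.nil_prefix)
  refine (hA.prepend hAne u []).union
    ((hred.mono (Finset.subset_insert _ _)).prepend (fun p hp => (hR p hp).2) [] c) ?_
  simp only [prepend, Finset.mem_image]
  rintro _ ⟨a, ha, rfl⟩ _ ⟨r, hr, rfl⟩ h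
  rw [List.dropLast_append_of_ne_nil (hAne a ha).1, List.nil_append] at h
  exact (hR r hr).1 ((h ▸ List.prefix_append _ _).trans (List.dropLast_prefix _))

lemma nbr_graft {g' : VPerm} (hT : Represents g (insert (u, v) R)) (huv : (u, v) ∉ R)
    (hrep : Represents g' (prepend u [] A ∪ prepend [] c R))
    (hred : Reduced (prepend u [] A ∪ prepend [] c R)) : Nbr g' = A.card + R.card := by
  rw [hrep.nbr_eq_card hred, Finset.card_union_of_disjoint, card_prepend, card_prepend]
  simp only [prepend, Finset.disjoint_left, Finset.mem_image]
  rintro _ ⟨a, -, rfl⟩ ⟨r, hr, hra⟩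
  simp only [List.nil_append, Prod.mk.injEq] at hra
  exact hT.not_fst_prefix (Finset.mem_insert_self _ _) (Finset.mem_insert_of_mem hr)
    (ne_of_mem_of_not_mem hr huv).symm (hra.1 ▸ List.prefix_append _ _)

end Graft

section Generators

variable {x0 x1 : VPerm}

lemma mapsCone_x0_zero_zero (hx0 : Represents x0 x0T) (s : List Bool) :
    MapsCone x0 (false :: false :: s) (false :: s) :=
  (hx0.mapsCone (p := ([false, false], [false])) (by decide)).append s

lemma mapsCone_x0_zero_one (hx0 : Represents x0 x0T) (s : List Bool) :
    MapsCone x0 (false :: true :: s) (true :: false :: s) :=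
  (hx0.mapsCone (p := ([false, true], [true, false])) (by decide)).append s

lemma mapsCone_x0_one (hx0 : Represents x0 x0T) (s : List Bool) :
    MapsCone x0 (true :: s) (true :: true :: s) :=
  (hx0.mapsCone (p := ([true], [true, true])) (by decide)).append s

lemma mapsCone_x1_zero (hx1 : Represents x1 x1T) (s : List Bool) :
    MapsCone x1 (false :: s) (false :: s) :=
  (hx1.mapsCone (p := ([false], [false])) (by decide)).append s

lemma mapsCone_x1_one_zero_zero (hx1 : Represents x1 x1T) (s : List Bool) :
    MapsCone x1 (true :: false :: false :: s) (true :: false :: s) :=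
  (hx1.mapsCone (p := ([true, false, false], [true, false])) (by decide)).append s

lemma mapsCone_x1_one_zero_one (hx1 : Represents x1 x1T) (s : List Bool) :
    MapsCone x1 (true :: false :: true :: s) (true :: true :: false :: s) :=
  (hx1.mapsCone (p := ([true, false, true], [true, true, false])) (by decide)).append s

lemma mapsCone_x1_one_one (hx1 : Represents x1 x1T) (s : List Bool) :
    MapsCone x1 (true :: true :: s) (true :: true :: true :: s) :=
  (hx1.mapsCone (p := ([true, true], [true, true, true])) (by decide)).append s

end Generators

-- The branches of `g · w'` inside the cone of `u`, with `u` stripped from the domain codes.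
def tableX0 : Finset (List Bool × List Bool) :=
  {([false], [false]), ([true], [true, false])}

def tableX0Sq : Finset (List Bool × List Bool) :=
  {([false, false], [false]), ([false, true], [true, false]), ([true], [true, true, false])}

def tableX0SqX1Inv : Finset (List Bool × List Bool) :=
  {([false, false], [false]), ([false, true], [true, false, false]), ([true], [true, false, true])}

def tableX0SqX1InvX0Inv : Finset (List Bool × List Bool) :=
  {([false, false], [false, false]), ([false, true], [false, true, false]),
    ([true], [false, true, true])}

lemma reduced_of_dropLast {A : Finset (List Bool × List Bool)}
    (h : ∀ p ∈ A, ∀ q ∈ A, p.1.dropLast = q.1.dropLast → p.2.dropLast = q.2.dropLast → p.1 = q.1) :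
    Reduced A := by
  rintro w v ⟨h₀, h₁⟩
  simpa using h _ h₀ _ h₁ (by simp) (by simp)

section Steps

variable {x0 x1 g : VPerm} {u : List Bool} {R : Finset (List Bool × List Bool)}

lemma graft_x0 (hx0 : Represents x0 x0T) (hT : Represents g (insert (u, [false]) R))
    (hu : (u, [false]) ∉ R) (hred : Reduced (insert (u, [false]) R)) :
    Represents (g.trans x0) (prepend u [] tableX0 ∪ prepend [] [true] R) ∧
      Reduced (prepend u [] tableX0 ∪ prepend [] [true] R) := by
  refine ⟨represents_graft hT hu ?_ ?_ fun p hp => ?_,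
    reduced_graft hT hu hred (reduced_of_dropLast (by decide)) (by decide)⟩
  · simpa [tableX0, Set.image_insert_eq] using isCompleteCode_zero_one
  · simp only [tableX0, Finset.forall_mem_insert, Finset.mem_singleton, forall_eq]
    exact ⟨mapsCone_x0_zero_zero hx0 [], mapsCone_x0_zero_one hx0 []⟩
  · obtain ⟨s, hs⟩ := hT.snd_eq_true_cons hu hp
    rw [hs]
    exact mapsCone_x0_one hx0 s

lemma graft_x0_sq (hx0 : Represents x0 x0T) (hT : Represents g (insert (u, [false]) R))
    (hu : (u, [false]) ∉ R) (hred : Reduced (insert (u, [false]) R)) :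
    Represents (g.trans (x0 ^ 2)) (prepend u [] tableX0Sq ∪ prepend [] [true, true] R) ∧
      Reduced (prepend u [] tableX0Sq ∪ prepend [] [true, true] R) := by
  refine ⟨represents_graft hT hu ?_ ?_ fun p hp => ?_,
    reduced_graft hT hu hred (reduced_of_dropLast (by decide)) (by decide)⟩
  · simpa [tableX0Sq, Set.image_insert_eq] using isCompleteCode_zero_zero_zero_one_one
  · simp only [tableX0Sq, Finset.forall_mem_insert, Finset.mem_singleton, forall_eq]
    exact ⟨(mapsCone_x0_zero_zero hx0 [false]).sq (mapsCone_x0_zero_zero hx0 []),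
      (mapsCone_x0_zero_zero hx0 [true]).sq (mapsCone_x0_zero_one hx0 []),
      (mapsCone_x0_zero_one hx0 []).sq (mapsCone_x0_one hx0 [false])⟩
  · obtain ⟨s, hs⟩ := hT.snd_eq_true_cons hu hp
    rw [hs]
    exact (mapsCone_x0_one hx0 s).sq (mapsCone_x0_one hx0 _)

lemma graft_x0_sq_x1_inv (hx0 : Represents x0 x0T) (hx1 : Represents x1 x1T)
    (hT : Represents g (insert (u, [false]) R)) (hu : (u, [false]) ∉ R)
    (hred : Reduced (insert (u, [false]) R)) :
    Represents ((g.trans (x0 ^ 2)).trans x1⁻¹) (prepend u [] tableX0SqX1Inv ∪ prepend [] [true] R) ∧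
      Reduced (prepend u [] tableX0SqX1Inv ∪ prepend [] [true] R) := by
  rw [Equiv.trans_assoc]
  refine ⟨represents_graft hT hu ?_ ?_ fun p hp => ?_,
    reduced_graft hT hu hred (reduced_of_dropLast (by decide)) (by decide)⟩
  · simpa [tableX0SqX1Inv, Set.image_insert_eq] using isCompleteCode_zero_zero_zero_one_one
  · simp only [tableX0SqX1Inv, Finset.forall_mem_insert, Finset.mem_singleton, forall_eq]
    exact ⟨((mapsCone_x0_zero_zero hx0 [false]).sq (mapsCone_x0_zero_zero hx0 [])).trans
        (mapsCone_x1_zero hx1 []).inv,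
      ((mapsCone_x0_zero_zero hx0 [true]).sq (mapsCone_x0_zero_one hx0 [])).trans
        (mapsCone_x1_one_zero_zero hx1 []).inv,
      ((mapsCone_x0_zero_one hx0 []).sq (mapsCone_x0_one hx0 [false])).trans
        (mapsCone_x1_one_zero_one hx1 []).inv⟩
  · obtain ⟨s, hs⟩ := hT.snd_eq_true_cons hu hp
    rw [hs]
    exact ((mapsCone_x0_one hx0 s).sq (mapsCone_x0_one hx0 _)).trans (mapsCone_x1_one_one hx1 s).inv

lemma graft_x0_sq_x1_inv_x0_inv (hx0 : Represents x0 x0T) (hx1 : Represents x1 x1T)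
    (hT : Represents g (insert (u, [false]) R)) (hu : (u, [false]) ∉ R)
    (hred : Reduced (insert (u, [false]) R)) :
    Represents (((g.trans (x0 ^ 2)).trans x1⁻¹).trans x0⁻¹)
        (prepend u [] tableX0SqX1InvX0Inv ∪ prepend [] [] R) ∧
      Reduced (prepend u [] tableX0SqX1InvX0Inv ∪ prepend [] [] R) := by
  rw [Equiv.trans_assoc, Equiv.trans_assoc, ← Equiv.trans_assoc (x0 ^ 2)]
  refine ⟨represents_graft hT hu ?_ ?_ fun p hp => ?_,
    reduced_graft hT hu hred (reduced_of_dropLast (by decide)) (by decide)⟩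
  · simpa [tableX0SqX1InvX0Inv, Set.image_insert_eq] using isCompleteCode_zero_zero_zero_one_one
  · simp only [tableX0SqX1InvX0Inv, Finset.forall_mem_insert, Finset.mem_singleton, forall_eq]
    exact ⟨(((mapsCone_x0_zero_zero hx0 [false]).sq (mapsCone_x0_zero_zero hx0 [])).trans
        (mapsCone_x1_zero hx1 []).inv).trans (mapsCone_x0_zero_zero hx0 []).inv,
      (((mapsCone_x0_zero_zero hx0 [true]).sq (mapsCone_x0_zero_one hx0 [])).trans
        (mapsCone_x1_one_zero_zero hx1 []).inv).trans (mapsCone_x0_zero_one hx0 [false]).inv,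
      (((mapsCone_x0_zero_one hx0 []).sq (mapsCone_x0_one hx0 [false])).trans
        (mapsCone_x1_one_zero_one hx1 []).inv).trans (mapsCone_x0_zero_one hx0 [true]).inv⟩
  · obtain ⟨s, hs⟩ := hT.snd_eq_true_cons hu hp
    rw [hs]
    exact (((mapsCone_x0_one hx0 s).sq (mapsCone_x0_one hx0 _)).trans
      (mapsCone_x1_one_one hx1 s).inv).trans (mapsCone_x0_one hx0 s).inv

end Steps

theorem stmt10_general (x0 x1 : VPerm)
    (hx0 : Represents x0 x0T) (hx1 : Represents x1 x1T)
    (g : VPerm)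
    (hbr : ∃ u : List Bool, IsBranch g u [false]) :
    (¬ ∃ u : List Bool, IsBranch (((g.trans (x0 ^ 2)).trans x1⁻¹).trans x0⁻¹) u [false]) ∧
    StrictPrefOfBranch (((g.trans (x0 ^ 2)).trans x1⁻¹).trans x0⁻¹) [false] ∧
    Nbr (((g.trans (x0 ^ 2)).trans x1⁻¹).trans x0⁻¹) ≤ Nbr g + 2 ∧
    Nbr g ≤ Nbr (g.trans x0) ∧
    Nbr g ≤ Nbr (g.trans (x0 ^ 2)) ∧
    Nbr g ≤ Nbr ((g.trans (x0 ^ 2)).trans x1⁻¹) ∧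
    Nbr g ≤ Nbr (((g.trans (x0 ^ 2)).trans x1⁻¹).trans x0⁻¹) := by
  obtain ⟨u, T, hT, hred, hmem⟩ := hbr
  rw [← Finset.insert_erase hmem] at hT hred
  have hu := Finset.notMem_erase (u, [false]) T
  obtain ⟨hrep₁, hred₁⟩ := graft_x0 hx0 hT hu hred
  obtain ⟨hrep₂, hred₂⟩ := graft_x0_sq hx0 hT hu hred
  obtain ⟨hrep₃, hred₃⟩ := graft_x0_sq_x1_inv hx0 hx1 hT hu hred
  obtain ⟨hrep₄, hred₄⟩ := graft_x0_sq_x1_inv_x0_inv hx0 hx1 hT hu hred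
  have hcard : tableX0.card = 2 ∧ tableX0Sq.card = 3 ∧ tableX0SqX1Inv.card = 3 ∧
      tableX0SqX1InvX0Inv.card = 3 := by decide
  have hN := (hT.nbr_eq_card hred).trans (Finset.card_insert_of_notMem hu)
  have hN₁ := nbr_graft hT hu hrep₁ hred₁
  have hN₂ := nbr_graft hT hu hrep₂ hred₂
  have hN₃ := nbr_graft hT hu hrep₃ hred₃
  have hN₄ := nbr_graft hT hu hrep₄ hred₄
  refine ⟨?_, ⟨u ++ [false, false], [false, false], (hrep₄.isBranch_iff_mem hred₄).2 ?_,
    List.prefix_append _ _, by simp⟩, by omega, by omega, by omega, by omega, by omega⟩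
  · rintro ⟨w, hw⟩
    rcases Finset.mem_union.1 ((hrep₄.isBranch_iff_mem hred₄).1 hw) with h | h
    · simp [prepend, tableX0SqX1InvX0Inv] at h
    · obtain ⟨p, hp, hpw⟩ := Finset.mem_image.1 h
      obtain ⟨s, hs⟩ := hT.snd_eq_true_cons hu hp
      simp [hs] at hpw
  · simp [prepend, tableX0SqX1InvX0Inv]

/-- Let `g ∈ V` with `N(g) ≥ 4` such that `0` is the range
code of some branch of `g`, and let `g1 = g·x0²·x1⁻¹·x0⁻¹` (left-to-right
products).  Then `0` is not the range code of any branch of `g1` (in fact `0`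
is a strict prefix of the range code of some branch of `g1`),
`N(g1) ≤ N(g)+2`, and `N(g·w') ≥ N(g)` for every prefix `w'` of
`x0·x0·x1⁻¹·x0⁻¹`. -/
theorem stmt10 (x0 x1 : VPerm)
    (hx0 : Represents x0 x0T) (hx1 : Represents x1 x1T)
    (g : VPerm) (hg : InV g) (hN : 4 ≤ Nbr g)
    (hbr : ∃ u : List Bool, IsBranch g u [false]) :
    (¬ ∃ u : List Bool, IsBranch (((g.trans (x0 ^ 2)).trans x1⁻¹).trans x0⁻¹) u [false]) ∧
    StrictPrefOfBranch (((g.trans (x0 ^ 2)).trans x1⁻¹).trans x0⁻¹) [false] ∧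
    Nbr (((g.trans (x0 ^ 2)).trans x1⁻¹).trans x0⁻¹) ≤ Nbr g + 2 ∧
    Nbr g ≤ Nbr (g.trans x0) ∧
    Nbr g ≤ Nbr (g.trans (x0 ^ 2)) ∧
    Nbr g ≤ Nbr ((g.trans (x0 ^ 2)).trans x1⁻¹) ∧
    Nbr g ≤ Nbr (((g.trans (x0 ^ 2)).trans x1⁻¹).trans x0⁻¹) :=
  stmt10_general x0 x1 hx0 hx1 g hbr
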